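/- arXiv:1904.06836 — 2 statements merged into one kernel-verified Lean document; each statement's English description precedes it below -/
import Mathlib

section
/- Let Σ₁ and Σ₂ be real symmetric positive definite d×d matrices. Then the limit as α → 0⁺ of the Power-Euclidean distance (1/α)‖Σ₁^α − Σ₂^α‖_F equals the Log-Euclidean distance ‖log(Σ₁) − log(Σ₂)‖_F. -/
open Matrix Filter

/-- Apply a real function to a real symmetric matrix spectrally:
`U * diag (f ∘ eigenvalues) * Uᵀ`. -/
noncomputable def matFun {d : ℕ} {A : Matrix (Fin d) (Fin d) ℝ}
    (hA : A.IsHermitian) (f : ℝ → ℝ) : Matrix (Fin d) (Fin d) ℝ :=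
  (hA.eigenvectorUnitary : Matrix (Fin d) (Fin d) ℝ) *
    Matrix.diagonal (f ∘ hA.eigenvalues) *
    (star hA.eigenvectorUnitary : Matrix (Fin d) (Fin d) ℝ)

/-- Frobenius norm of a real matrix. -/
noncomputable def frobNorm {d : ℕ} (A : Matrix (Fin d) (Fin d) ℝ) : ℝ :=
  Real.sqrt (∑ i, ∑ j, (A i j) ^ 2)

/-!
Spectrally, `(Σ^α - 1) / α = U diag ((λᵢ^α - 1) / α) Uᵀ`, and `(λ^α - 1) / α → log λ` because
`α ↦ λ^α` has derivative `log λ` at `0`. For `α > 0` the identity matrices cancel in the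
difference, so `(1/α) (Σ₁^α - Σ₂^α)` tends to `log Σ₁ - log Σ₂`; continuity of the Frobenius
norm concludes.
-/

attribute [local instance] Matrix.frobeniusNormedAddCommGroup Matrix.frobeniusNormedSpace

theorem Real.tendsto_rpow_sub_one_div {x : ℝ} (hx : 0 < x) :
    Tendsto (fun α : ℝ => (x ^ α - 1) / α) (nhdsWithin 0 {0}ᶜ) (nhds (Real.log x)) := by
  have hderiv := (Real.hasStrictDerivAt_const_rpow hx 0).hasDerivAt
  rw [Real.rpow_zero, one_mul, hasDerivAt_iff_tendsto_slope] at hderiv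
  simpa only [slope_fun_def_field, Real.rpow_zero, sub_zero] using hderiv

theorem frobNorm_eq_norm {d : ℕ} (A : Matrix (Fin d) (Fin d) ℝ) : frobNorm A = ‖A‖ := by
  simp only [frobNorm, Matrix.frobenius_norm_def, Real.norm_eq_abs, Real.sqrt_eq_rpow]
  norm_cast
  simp only [sq_abs]

section matFun

variable {d : ℕ} {A : Matrix (Fin d) (Fin d) ℝ}

theorem matFun_sub (hA : A.IsHermitian) (f g : ℝ → ℝ) :
    matFun hA f - matFun hA g = matFun hA (fun x => f x - g x) := by
  simp only [matFun, ← Matrix.sub_mul, ← Matrix.mul_sub, Matrix.diagonal_sub]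
  rfl

theorem matFun_const_mul (hA : A.IsHermitian) (c : ℝ) (f : ℝ → ℝ) :
    matFun hA (fun x => c * f x) = c • matFun hA f := by
  rw [matFun, matFun,
    show (fun x => c * f x) ∘ hA.eigenvalues = c • (f ∘ hA.eigenvalues) from rfl,
    Matrix.diagonal_smul, Matrix.mul_smul, Matrix.smul_mul]

theorem matFun_one (hA : A.IsHermitian) : matFun hA (fun _ => 1) = 1 := by
  rw [matFun, show (fun _ : ℝ => (1 : ℝ)) ∘ hA.eigenvalues = fun _ => 1 from rfl,
    Matrix.diagonal_one, Matrix.mul_one]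
  exact Matrix.mem_unitaryGroup_iff.mp hA.eigenvectorUnitary.2

theorem matFun_sub_one_div (hA : A.IsHermitian) (f : ℝ → ℝ) (c : ℝ) :
    matFun hA (fun x => (f x - 1) / c) = c⁻¹ • (matFun hA f - 1) := by
  simp only [div_eq_inv_mul, matFun_const_mul, ← matFun_one hA, matFun_sub]

theorem tendsto_matFun {ι : Type*} {l : Filter ι} (hA : A.IsHermitian) {F : ι → ℝ → ℝ}
    {g : ℝ → ℝ}
    (hF : ∀ i, Tendsto (fun t => F t (hA.eigenvalues i)) l (nhds (g (hA.eigenvalues i)))) :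
    Tendsto (fun t => matFun hA (F t)) l (nhds (matFun hA g)) := by
  have hconj : Continuous (fun M : Matrix (Fin d) (Fin d) ℝ =>
      (hA.eigenvectorUnitary : Matrix (Fin d) (Fin d) ℝ) * M *
        (star hA.eigenvectorUnitary : Matrix (Fin d) (Fin d) ℝ)) := by
    fun_prop
  exact (hconj.tendsto _).comp <|
    (continuous_id.matrix_diagonal.tendsto _).comp (tendsto_pi_nhds.mpr hF)

theorem Matrix.PosDef.tendsto_matFun_rpow_sub_one_div (hA : A.PosDef) :
    Tendsto (fun α : ℝ => matFun hA.1 (fun x => (x ^ α - 1) / α))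
      (nhdsWithin 0 (Set.Ioi 0)) (nhds (matFun hA.1 Real.log)) :=
  tendsto_matFun hA.1 fun i =>
    (Real.tendsto_rpow_sub_one_div (hA.eigenvalues_pos i)).mono_left <|
      nhdsWithin_mono _ fun _ hα => ne_of_gt hα

end matFun

/-- For real symmetric positive definite matrices `S1, S2`, the Power-Euclidean distance
`(1/α) ‖S1^α − S2^α‖_F` tends, as `α → 0⁺`, to the Log-Euclidean distance
`‖log S1 − log S2‖_F`. -/
theorem stmt_1 {d : ℕ} (S1 S2 : Matrix (Fin d) (Fin d) ℝ)
    (h₁ : S1.PosDef) (h₂ : S2.PosDef) :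
    Tendsto
      (fun α : ℝ =>
        (1 / α) * frobNorm (matFun h₁.1 (fun x => x ^ α) - matFun h₂.1 (fun x => x ^ α)))
      (nhdsWithin 0 (Set.Ioi 0))
      (nhds (frobNorm (matFun h₁.1 Real.log - matFun h₂.1 Real.log))) := by
  simp only [frobNorm_eq_norm]
  have hlog := h₁.tendsto_matFun_rpow_sub_one_div.sub h₂.tendsto_matFun_rpow_sub_one_div
  refine hlog.norm.congr' ?_
  filter_upwards [self_mem_nhdsWithin] with α (hα : 0 < α)
  rw [matFun_sub_one_div, matFun_sub_one_div, ← smul_sub, sub_sub_sub_cancel_right, norm_smul,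
    Real.norm_of_nonneg (inv_nonneg.mpr hα.le), one_div]
end

section
/- Let S be a symmetric positive definite matrix. The function F(Σ̂) = log|Σ̂| + tr(Σ̂^{-1} S) + D_vN(I, Σ̂), minimized over symmetric positive definite matrices Σ̂ commuting with S, where D_vN(A,B) = tr(A(log A − log B) − A + B), is uniquely minimized at Σ̂ = S^{1/2}. -/
open Matrix

section

open scoped ComplexOrder

/-- The positive semidefinite square root of a positive semidefinite matrix
(as in Mathlib of December 2024, since removed). -/
noncomputable def Matrix.PosSemidef.sqrt {n 𝕜 : Type*} [Fintype n] [RCLike 𝕜] [DecidableEq n]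
    {A : Matrix n n 𝕜} (hA : A.PosSemidef) : Matrix n n 𝕜 :=
  hA.1.eigenvectorUnitary.1 * diagonal ((↑) ∘ (√·) ∘ hA.1.eigenvalues) *
  (star hA.1.eigenvectorUnitary : Matrix n n 𝕜)

theorem Matrix.PosSemidef.posSemidef_sqrt {n 𝕜 : Type*} [Fintype n] [RCLike 𝕜] [DecidableEq n]
    {A : Matrix n n 𝕜} (hA : A.PosSemidef) : PosSemidef hA.sqrt := by
  apply PosSemidef.mul_mul_conjTranspose_same
  refine posSemidef_diagonal_iff.mpr fun i ↦ ?_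
  rw [Function.comp_apply, RCLike.nonneg_iff]
  constructor
  · simp only [RCLike.ofReal_re]
    exact Real.sqrt_nonneg _
  · simp only [RCLike.ofReal_im]

end

/-- The vN-MLE objective `F(Σ̂) = log|Σ̂| + tr(Σ̂⁻¹ S) + D_vN(I, Σ̂)`, where
`D_vN(I, Σ̂) = tr(−log Σ̂ − I + Σ̂)`. -/
noncomputable def vnObj {d : ℕ} (S : Matrix (Fin d) (Fin d) ℝ)
    {T : Matrix (Fin d) (Fin d) ℝ} (hT : T.IsHermitian) : ℝ :=
  Real.log T.det + (T⁻¹ * S).trace + (-(matFun hT Real.log) - 1 + T).trace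

/-!
The term `log |Σ̂|` cancels against `tr (log Σ̂)`, so on positive definite matrices the objective is
`tr (Σ̂⁻¹ S) + tr Σ̂ - d`. With `A = S^{1/2}` one has the exact expansion
`tr (Σ̂⁻¹ S) + tr Σ̂ = 2 tr A + tr ((Σ̂ - A) Σ̂⁻¹ (Σ̂ - A))`, and the last term is the trace of a
positive semidefinite matrix, vanishing only when `Σ̂ = A`.
-/

open scoped ComplexOrder

namespace Matrix

variable {n 𝕜 : Type*} [Fintype n] [RCLike 𝕜]

theorem PosSemidef.sqrt_mul_self [DecidableEq n] {A : Matrix n n 𝕜} (hA : A.PosSemidef) :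
    hA.sqrt * hA.sqrt = A := by
  conv_rhs => rw [hA.1.spectral_theorem, Unitary.conjStarAlgAut_apply]
  simp only [PosSemidef.sqrt, Matrix.mul_assoc]
  rw [← Matrix.mul_assoc (star _) _, Unitary.coe_star_mul_self, Matrix.one_mul,
    ← Matrix.mul_assoc (diagonal _), diagonal_mul_diagonal]
  congr 3
  funext i
  simp [← RCLike.ofReal_mul, Real.mul_self_sqrt (hA.eigenvalues_nonneg i)]

theorem PosDef.posDef_sqrt [DecidableEq n] {A : Matrix n n 𝕜} (hA : A.PosDef) :
    hA.posSemidef.sqrt.PosDef := by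
  refine Unitary.isUnit_coe.posDef_star_right_conjugate_iff.mpr ?_
  refine posDef_diagonal_iff.mpr fun i ↦ ?_
  simpa using hA.eigenvalues_pos i

theorem PosDef.conjTranspose_mul_mul_same_eq_zero_iff {m : Type*} [Fintype m] {A : Matrix n n 𝕜}
    (hA : A.PosDef) {B : Matrix n m 𝕜} : Bᴴ * A * B = 0 ↔ B = 0 := by
  refine ⟨fun h ↦ ext_iff_mulVec.mpr fun x ↦ ?_, fun h ↦ by simp [h]⟩
  by_contra hBx
  have hpos := hA.dotProduct_mulVec_pos (x := B *ᵥ x) (by simpa using hBx)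
  rw [star_mulVec, dotProduct_mulVec, vecMul_vecMul, ← dotProduct_mulVec, mulVec_mulVec, h]
    at hpos
  simp at hpos

theorem trace_inv_mul_add_trace_eq [DecidableEq n] {R : Type*} [CommRing R]
    {S A T : Matrix n n R}
    (hA : IsUnit A.det) (hT : IsUnit T.det) (hAS : A * A = S) :
    (T⁻¹ * S).trace + T.trace =
      (A⁻¹ * S).trace + A.trace + ((T - A) * T⁻¹ * (T - A)).trace := by
  have hAinvS : A⁻¹ * S = A := by
    rw [← hAS, ← Matrix.mul_assoc, nonsing_inv_mul _ hA, Matrix.one_mul]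
  have hexpand : (T - A) * T⁻¹ * (T - A) = T - A - A + A * T⁻¹ * A := by
    simp only [Matrix.sub_mul, Matrix.mul_sub, mul_nonsing_inv _ hT, Matrix.one_mul,
      Matrix.mul_assoc, nonsing_inv_mul _ hT, Matrix.mul_one]
    abel
  have hcycle : (A * T⁻¹ * A).trace = (T⁻¹ * S).trace := by
    rw [Matrix.mul_assoc, trace_mul_comm, Matrix.mul_assoc, hAS]
  rw [hAinvS, hexpand, trace_add, trace_sub, trace_sub, hcycle]
  ring

end Matrix

theorem trace_matFun_log {d : ℕ} {T : Matrix (Fin d) (Fin d) ℝ} (hT : T.PosDef) :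
    (matFun hT.1 Real.log).trace = Real.log T.det := by
  rw [matFun, trace_mul_cycle, Unitary.coe_star_mul_self, Matrix.one_mul, trace_diagonal,
    hT.1.det_eq_prod_eigenvalues, RCLike.ofReal_real_eq_id]
  exact (Real.log_prod fun i _ ↦ (hT.eigenvalues_pos i).ne').symm

theorem vnObj_eq {d : ℕ} (S : Matrix (Fin d) (Fin d) ℝ) {T : Matrix (Fin d) (Fin d) ℝ}
    (hT : T.PosDef) : vnObj S hT.1 = (T⁻¹ * S).trace + T.trace - d := by
  rw [vnObj, trace_add, trace_sub, trace_neg, trace_matFun_log hT, trace_one, Fintype.card_fin]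
  ring

theorem vnObj_eq_vnObj_sqrt_add {d : ℕ} {S T : Matrix (Fin d) (Fin d) ℝ} (hS : S.PosDef)
    (hT : T.PosDef) :
    vnObj S hT.1 = vnObj S hS.posSemidef.posSemidef_sqrt.1 +
      ((T - hS.posSemidef.sqrt)ᴴ * T⁻¹ * (T - hS.posSemidef.sqrt)).trace := by
  have hA := hS.posDef_sqrt
  have hM : (T - hS.posSemidef.sqrt)ᴴ = T - hS.posSemidef.sqrt := (hT.1.sub hA.1).eq
  rw [hM, vnObj_eq S hT, vnObj_eq S hA, trace_inv_mul_add_trace_eq hA.det_pos.ne'.isUnit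
    hT.det_pos.ne'.isUnit hS.posSemidef.sqrt_mul_self]
  ring

/-- For `S` symmetric positive definite, the vN-MLE objective, over symmetric positive
definite matrices commuting with `S`, is uniquely minimized at `Σ̂ = S^{1/2}`. -/
theorem stmt_16 {d : ℕ} (S : Matrix (Fin d) (Fin d) ℝ) (hS : S.PosDef) :
    ∀ (T : Matrix (Fin d) (Fin d) ℝ) (hT : T.PosDef), T * S = S * T →
      vnObj S hS.posSemidef.posSemidef_sqrt.1 ≤ vnObj S hT.1 ∧
      (vnObj S hT.1 = vnObj S hS.posSemidef.posSemidef_sqrt.1 →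
        T = hS.posSemidef.sqrt) := by
  intro T hT _
  have hgap := vnObj_eq_vnObj_sqrt_add hS hT
  have hpsd := hT.inv.posSemidef.conjTranspose_mul_mul_same (T - hS.posSemidef.sqrt)
  refine ⟨by linarith [hpsd.trace_nonneg], fun heq ↦ ?_⟩
  have hzero := hpsd.trace_eq_zero_iff.mp (by linarith)
  exact sub_eq_zero.mp (hT.inv.conjTranspose_mul_mul_same_eq_zero_iff.mp hzero)
end
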